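/- Write Ψ_q(x) for the characteristic function of singular binary cubic forms over F_q (those x with Disc(x) = 0). Then \hatΨ_q(x) = q^{-1} + q^{-2} − q^{-3} if x = 0; \hatΨ_q(x) = q^{-2} − q^{-3} if x ≠ 0 and Disc(x) = 0; and \hatΨ_q(x) = −q^{-3} if Disc(x) ≠ 0. -/

import Mathlib

open scoped Classical
open MvPolynomial Matrix

noncomputable section

/-- The standard additive character `t ↦ exp(2πi·Tr_{F/F_p}(t)/p)` of a finite field `F`
of characteristic `p`. -/
def psiF (p : ℕ) [Fact p.Prime] (F : Type*) [Field F] [Fintype F] [CharP F p] (t : F) : ℂ :=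
  letI : Algebra (ZMod p) F := ZMod.algebra F p
  Complex.exp (2 * Real.pi * Complex.I * ((Algebra.trace (ZMod p) F t).val : ℂ) / (p : ℂ))

variable {F : Type*} [Field F] [Fintype F]

/-- The bilinear form `[x,x'] = aa' + bb'/3 + cc'/3 + dd'` on binary cubic forms. -/
def bformBC (x y : Fin 4 → F) : F :=
  x 0 * y 0 + x 1 * y 1 / 3 + x 2 * y 2 / 3 + x 3 * y 3

/-- The Fourier transform on the space of binary cubic forms over `F`. -/
def FTBC (p : ℕ) [Fact p.Prime] [CharP F p] (Φ : (Fin 4 → F) → ℂ) (y : Fin 4 → F) : ℂ :=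
  ((Fintype.card F : ℂ) ^ 4)⁻¹ * ∑ x : Fin 4 → F, Φ x * psiF p F (bformBC x y)

/-- The discriminant of the binary cubic form `(a,b,c,d)`. -/
def DiscBC (x : Fin 4 → F) : F :=
  (x 1)^2 * (x 2)^2 + 18 * (x 0) * (x 1) * (x 2) * (x 3) - 4 * (x 0) * (x 2)^3
    - 4 * (x 1)^3 * (x 3) - 27 * (x 0)^2 * (x 3)^2

/-!
A nonzero singular binary cubic has exactly one double root on `ℙ¹(F_q)`, so the singular
forms are the union of the `q + 1` planes `W_P = {ℓ_P² · (linear form)}`, any two of which meet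
only in `0`. Summing the character over `W_P` gives `q²` or `0` according as `y` is orthogonal to
`W_P` or not, and for the form `[x,y]` this orthogonality says that `y` has a double root at
`P^⊥ = [t : -s]` when `P = [s : t]`. Hence `q⁴ Ψ̂(y) = q² N(y) - q`, where `N(y)` is the number
of double roots of `y` on `ℙ¹(F_q)`: `q + 1`, `1` or `0` in the three cases.
-/

open Finset

theorem sum_sum_comp_add_eq_sum_add_card_smul {ι Z V M : Type*} [Fintype ι] [Nonempty ι]
    [Fintype Z] [Zero Z] [Zero V] [AddCommMonoid M] (T : ι → Z → V) (S : Finset V)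
    (hT0 : ∀ i, T i 0 = 0) (hT : ∀ i j z z', z ≠ 0 → T i z = T j z' → i = j ∧ z = z')
    (hS : ∀ v, v ∈ S ↔ ∃ i z, T i z = v) (f : V → M) :
    ∑ i, ∑ z, f (T i z) + f 0 = ∑ v ∈ S, f v + Fintype.card ι • f 0 := by
  have h0 : (0 : V) ∈ S := (hS 0).2 ⟨Classical.arbitrary ι, 0, hT0 _⟩
  have hsplit (i : ι) : ∑ z, f (T i z) = f 0 + ∑ z ∈ univ.erase 0, f (T i z) := by
    rw [← add_sum_erase _ _ (mem_univ 0), hT0]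
  have hinj : Set.InjOn (fun q : ι × Z => T q.1 q.2) (univ ×ˢ univ.erase 0 : Finset (ι × Z)) := by
    rintro ⟨i, z⟩ hq ⟨j, z'⟩ - h
    obtain ⟨rfl, rfl⟩ := hT i j z z' (by simpa using hq) h
    rfl
  have himage : (univ ×ˢ univ.erase (0 : Z)).image (fun q : ι × Z => T q.1 q.2) = S.erase 0 := by
    ext v
    simp only [mem_image, mem_product, mem_univ, mem_erase, true_and, and_true, Prod.exists, hS]
    constructor
    · rintro ⟨i, z, hz, rfl⟩
      exact ⟨fun h => hz (hT i i z 0 hz (h.trans (hT0 i).symm)).2, i, z, rfl⟩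
    · rintro ⟨hv, i, z, rfl⟩
      exact ⟨i, z, fun hz => hv (by rw [hz, hT0]), rfl⟩
  rw [← add_sum_erase S f h0, ← himage, sum_image hinj, sum_product]
  simp only [hsplit, sum_add_distrib, sum_const, card_univ]
  abel

section BinaryCubics

variable {K : Type*} [Field K]

def partialU (x : Fin 4 → K) (P : K × K) : K :=
  3 * x 0 * P.1 ^ 2 + 2 * x 1 * P.1 * P.2 + x 2 * P.2 ^ 2

def partialV (x : Fin 4 → K) (P : K × K) : K :=
  x 1 * P.1 ^ 2 + 2 * x 2 * P.1 * P.2 + 3 * x 3 * P.2 ^ 2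

def IsSingularAt (x : Fin 4 → K) (P : K × K) : Prop :=
  partialU x P = 0 ∧ partialV x P = 0

lemma isSingularAt_smul_iff {x : Fin 4 → K} {P : K × K} {c : K} (hc : c ≠ 0) :
    IsSingularAt x (c • P) ↔ IsSingularAt x P := by
  have hU : partialU x (c • P) = c ^ 2 * partialU x P := by
    simp only [partialU, Prod.smul_fst, Prod.smul_snd, smul_eq_mul]; ring
  have hV : partialV x (c • P) = c ^ 2 * partialV x P := by
    simp only [partialV, Prod.smul_fst, Prod.smul_snd, smul_eq_mul]; ring
  simp [IsSingularAt, hU, hV, hc]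

/-- The certificates express `9 (s t' - s' t)⁴ xᵢ` in the ideal generated by the four
partial derivatives. -/
lemma eq_zero_of_isSingularAt_of_isSingularAt (h3 : (3 : K) ≠ 0) {x : Fin 4 → K}
    {s t s' t' : K} (h : IsSingularAt x (s, t)) (h' : IsSingularAt x (s', t'))
    (hdet : s * t' - s' * t ≠ 0) : x = 0 := by
  obtain ⟨hU, hV⟩ := h
  obtain ⟨hU', hV'⟩ := h'
  simp only [partialU, partialV] at hU hV hU' hV'
  have hc : (9 : K) * (s * t' - s' * t) ^ 4 ≠ 0 :=
    mul_ne_zero (by rw [show (9 : K) = 3 * 3 by norm_num]; exact mul_ne_zero h3 h3)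
      (pow_ne_zero _ hdet)
  ext i
  refine (mul_eq_zero.mp ?_).resolve_left hc
  fin_cases i <;> simp only [Fin.zero_eta, Fin.mk_one, Fin.reduceFinMk]
  · linear_combination (9*t^2*s'^2*t'^2 - 12*s*t*s'*t'^3 + 3*s^2*t'^4) * hU +
      (6*t^2*s'*t'^3 - 6*s*t*t'^4) * hV +
      (3*t^4*s'^2 - 12*s*t^3*s'*t' + 9*s^2*t^2*t'^2) * hU' +
      (-6*t^4*s'*t' + 6*s*t^3*t'^2) * hV'
  · linear_combination (-18*t^2*s'^3*t' + 18*s*t*s'^2*t'^2) * hU +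
      (-9*t^2*s'^2*t'^2 + 9*s^2*t'^4) * hV +
      (18*s^2*t^2*s'*t' - 18*s^3*t*t'^2) * hU' +
      (9*t^4*s'^2 - 9*s^2*t^2*t'^2) * hV'
  · linear_combination (9*t^2*s'^4 - 9*s^2*s'^2*t'^2) * hU +
      (18*s*t*s'^2*t'^2 - 18*s^2*s'*t'^3) * hV +
      (-9*s^2*t^2*s'^2 + 9*s^4*t'^2) * hU' +
      (-18*s*t^3*s'^2 + 18*s^2*t^2*s'*t') * hV'
  · linear_combination (-6*s*t*s'^4 + 6*s^2*s'^3*t') * hU +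
      (3*t^2*s'^4 - 12*s*t*s'^3*t' + 9*s^2*s'^2*t'^2) * hV +
      (6*s^3*t*s'^2 - 6*s^4*s'*t') * hU' +
      (9*s^2*t^2*s'^2 - 12*s^3*t*s'*t' + 3*s^4*t'^2) * hV'

/-- Points of the projective line: `none` is `[1 : 0]` and `some e` is `[e : 1]`. -/
def projPoint : Option K → K × K
  | none => (1, 0)
  | some e => (e, 1)

lemma projPoint_det_ne_zero {m m' : Option K} (h : m ≠ m') :
    (projPoint m).1 * (projPoint m').2 - (projPoint m').1 * (projPoint m).2 ≠ 0 := by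
  match m, m' with
  | none, none => exact absurd rfl h
  | none, some _ => simp [projPoint]
  | some _, none => simp [projPoint]
  | some e, some e' =>
    simpa [projPoint, sub_eq_zero] using fun h' => h (congrArg some h')

lemma exists_eq_smul_projPoint {P : K × K} (hP : P ≠ 0) :
    ∃ (c : K) (m : Option K), c ≠ 0 ∧ P = c • projPoint m := by
  obtain ⟨s, t⟩ := P
  by_cases ht : t = 0
  · subst ht
    exact ⟨s, none, fun hs => hP (by simp [hs]), by simp [projPoint]⟩
  · exact ⟨t, some (s / t), ht, by simp [projPoint, mul_div_cancel₀ s ht]⟩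

lemma eq_zero_of_isSingularAt_projPoint (h3 : (3 : K) ≠ 0) {x : Fin 4 → K} {m m' : Option K}
    (hm : m ≠ m') (h : IsSingularAt x (projPoint m)) (h' : IsSingularAt x (projPoint m')) :
    x = 0 :=
  eq_zero_of_isSingularAt_of_isSingularAt h3 h h' (projPoint_det_ne_zero hm)

/-- The coefficients of `ℓ² (z₁ u + z₂ v)`, where `ℓ = v` for `none` and `ℓ = u - e v` for
`some e` is the linear form vanishing at `projPoint m`. -/
def doubleRootForm : Option K → K × K → Fin 4 → K
  | none, z => ![0, 0, z.1, z.2]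
  | some e, z => ![z.1, z.2 - 2 * e * z.1, e ^ 2 * z.1 - 2 * e * z.2, e ^ 2 * z.2]

lemma doubleRootForm_zero (m : Option K) : doubleRootForm m 0 = 0 := by
  cases m <;> ext i <;> fin_cases i <;> simp [doubleRootForm]

lemma doubleRootForm_injective (m : Option K) : Function.Injective (doubleRootForm m) := by
  intro z z' h
  cases m with
  | none =>
    have h2 := congrFun h 2
    have h3 := congrFun h 3
    simp only [doubleRootForm] at h2 h3
    exact Prod.ext (by simpa using h2) (by simpa using h3)
  | some e =>
    have h0 := congrFun h 0
    have h1 := congrFun h 1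
    simp only [doubleRootForm, Matrix.cons_val] at h0 h1
    exact Prod.ext h0 (by linear_combination h1 + 2 * e * h0)

lemma discBC_doubleRootForm (m : Option K) (z : K × K) : DiscBC (doubleRootForm m z) = 0 := by
  cases m
  · simp [DiscBC, doubleRootForm]
  · simp [DiscBC, doubleRootForm]; ring

lemma isSingularAt_doubleRootForm (m : Option K) (z : K × K) :
    IsSingularAt (doubleRootForm m z) (projPoint m) := by
  cases m <;> constructor <;> simp [partialU, partialV, doubleRootForm, projPoint] <;> ring

lemma isSingularAt_projPoint_iff (h3 : (3 : K) ≠ 0) {x : Fin 4 → K} {m : Option K} :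
    IsSingularAt x (projPoint m) ↔ ∃ z, doubleRootForm m z = x := by
  refine ⟨fun ⟨hU, hV⟩ => ?_, fun ⟨z, hz⟩ => hz ▸ isSingularAt_doubleRootForm m z⟩
  cases m with
  | none =>
    simp only [partialU, partialV, projPoint] at hU hV
    refine ⟨(x 2, x 3), ?_⟩
    ext i; fin_cases i <;> simp [doubleRootForm]
    · simpa [h3, eq_comm] using hU
    · simpa [eq_comm] using hV
  | some e =>
    simp only [partialU, partialV, projPoint] at hU hV
    refine ⟨(x 0, x 1 + 2 * e * x 0), ?_⟩
    ext i; fin_cases i <;> simp [doubleRootForm]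
    · linear_combination -hU
    · refine mul_left_cancel₀ h3 ?_
      linear_combination 2 * e * hU - hV

lemma eq_of_doubleRootForm_eq (h3 : (3 : K) ≠ 0) {m m' : Option K} {z z' : K × K} (hz : z ≠ 0)
    (h : doubleRootForm m z = doubleRootForm m' z') : m = m' ∧ z = z' := by
  obtain rfl : m = m' := by
    by_contra hm
    refine hz (doubleRootForm_injective m ?_)
    rw [doubleRootForm_zero]
    exact eq_zero_of_isSingularAt_projPoint h3 hm (isSingularAt_doubleRootForm m z)
      (h ▸ isSingularAt_doubleRootForm m' z')
  exact ⟨rfl, doubleRootForm_injective m h⟩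

/-- The Hessian `(b² - 3ac) u² + (bc - 9ad) uv + (c² - 3bd) v²` of `x` has discriminant
`-3 Disc x`; when that vanishes, the double root of the Hessian is a singular point of `x`.
In characteristic 2 the Hessian is a square, whose root needs square roots in `K`. -/
lemma exists_isSingularAt_of_discBC_eq_zero [Finite K] (h3 : (3 : K) ≠ 0) {x : Fin 4 → K}
    (hD : DiscBC x = 0) : ∃ P : K × K, P ≠ 0 ∧ IsSingularAt x P := by
  simp only [IsSingularAt, partialU, partialV]
  set a := x 0
  set b := x 1
  set c := x 2
  set d := x 3
  have hD' : b^2*c^2 + 18*a*b*c*d - 4*a*c^3 - 4*b^3*d - 27*a^2*d^2 = 0 := hD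
  have key : (b*c - 9*a*d)^2 = 4*(b^2 - 3*a*c)*(c^2 - 3*b*d) := by linear_combination -3 * hD'
  by_cases hR : b^2 - 3*a*c = 0
  · have hQ : b*c - 9*a*d = 0 := pow_eq_zero_iff two_ne_zero |>.mp (by rw [key, hR]; ring)
    by_cases ha : a = 0
    · have hb : b = 0 := pow_eq_zero_iff two_ne_zero |>.mp (by linear_combination hR + 3 * c * ha)
      exact ⟨(1, 0), by simp, by simp [ha, hb], by simp [hb]⟩
    · refine ⟨(-b, 3*a), fun h => ha ?_, ?_, ?_⟩
      · simpa [h3] using congrArg Prod.snd h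
      · linear_combination (-3*a) * hR
      · linear_combination b * hR - 3*a*hQ
  by_cases h2 : (2 : K) = 0
  · have hQ : b*c - 9*a*d = 0 := pow_eq_zero_iff two_ne_zero |>.mp
      (by rw [key]; linear_combination 2*(b^2-3*a*c)*(c^2-3*b*d)*h2)
    have hsq := FiniteField.isSquare_of_char_two
      (CharP.ringChar_of_prime_eq_zero Nat.prime_two (by exact_mod_cast h2))
    obtain ⟨k, hk⟩ := hsq (c^2 - 3*b*d)
    obtain ⟨l, hl⟩ := hsq (b^2 - 3*a*c)
    refine ⟨(k, l), fun h => hR ?_, ?_, ?_⟩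
    · rw [hl, show l = 0 from congrArg Prod.snd h, mul_zero]
    · linear_combination -3*a*hk - c*hl + b*k*l*h2 + b*hQ
    · linear_combination -b*hk - 3*d*hl + c*k*l*h2 + c*hQ
  · refine ⟨(-(b*c - 9*a*d), 2*(b^2 - 3*a*c)), fun h => ?_, ?_, ?_⟩
    · exact mul_ne_zero h2 hR (congrArg Prod.snd h)
    · linear_combination (-9*a) * hD'
    · linear_combination (-3*b) * hD'

lemma discBC_eq_zero_iff [Finite K] (h3 : (3 : K) ≠ 0) {x : Fin 4 → K} :
    DiscBC x = 0 ↔ ∃ m, IsSingularAt x (projPoint m) := by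
  constructor
  · intro hD
    obtain ⟨P, hP, hsing⟩ := exists_isSingularAt_of_discBC_eq_zero h3 hD
    obtain ⟨c, m, hc, rfl⟩ := exists_eq_smul_projPoint hP
    exact ⟨m, (isSingularAt_smul_iff hc).mp hsing⟩
  · rintro ⟨m, hm⟩
    obtain ⟨z, rfl⟩ := (isSingularAt_projPoint_iff h3).mp hm
    exact discBC_doubleRootForm m z

def perpPoint (P : K × K) : K × K := (P.2, -P.1)

lemma three_mul_bformBC_doubleRootForm (h3 : (3 : K) ≠ 0) (m : Option K) (z : K × K)
    (y : Fin 4 → K) :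
    3 * bformBC (doubleRootForm m z) y =
      z.1 * partialU y (perpPoint (projPoint m)) + z.2 * partialV y (perpPoint (projPoint m)) := by
  cases m
  · simp [bformBC, doubleRootForm, perpPoint, projPoint, partialU, partialV]
    field_simp
  · simp [bformBC, doubleRootForm, perpPoint, projPoint, partialU, partialV]
    field_simp
    ring

/-- `perpPoint` on the projective line, in the coordinates of `projPoint`. -/
def dualPoint : Option K → Option K
  | none => some 0
  | some e => if e = 0 then none else some (-e⁻¹)

lemma dualPoint_involutive : Function.Involutive (dualPoint (K := K)) := by
  rintro (_ | e)
  · simp [dualPoint]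
  · by_cases he : e = 0
    · simp [dualPoint, he]
    · simp [dualPoint, he]

lemma exists_perpPoint_projPoint_eq_smul (m : Option K) :
    ∃ c : K, c ≠ 0 ∧ perpPoint (projPoint m) = c • projPoint (dualPoint m) := by
  rcases m with _ | e
  · exact ⟨-1, by simp, by simp [perpPoint, projPoint, dualPoint]⟩
  · by_cases he : e = 0
    · exact ⟨1, one_ne_zero, by simp [perpPoint, projPoint, dualPoint, he]⟩
    · exact ⟨-e, neg_ne_zero.mpr he, by simp [perpPoint, projPoint, dualPoint, he]⟩

lemma isSingularAt_perpPoint_projPoint_iff {y : Fin 4 → K} {m : Option K} :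
    IsSingularAt y (perpPoint (projPoint m)) ↔ IsSingularAt y (projPoint (dualPoint m)) := by
  obtain ⟨c, hc, h⟩ := exists_perpPoint_projPoint_eq_smul m
  rw [h, isSingularAt_smul_iff hc]

end BinaryCubics

section Fourier

variable (p : ℕ) [Fact p.Prime] [CharP F p]

def psiAddChar : AddChar F ℂ :=
  letI : Algebra (ZMod p) F := ZMod.algebra F p
  ZMod.stdAddChar.compAddMonoidHom (Algebra.trace (ZMod p) F).toAddMonoidHom

lemma psiAddChar_apply (t : F) : psiAddChar p t = psiF p F t := by
  simp only [psiAddChar, psiF, AddChar.compAddMonoidHom_apply, LinearMap.toAddMonoidHom_coe,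
    ZMod.stdAddChar_apply, ZMod.toCircle_apply]

lemma psiAddChar_ne_one : psiAddChar (F := F) p ≠ 1 := by
  let : Algebra (ZMod p) F := ZMod.algebra F p
  obtain ⟨t, ht⟩ := DFunLike.ne_iff.mp (Algebra.trace_ne_zero (ZMod p) F)
  refine AddChar.ne_one_iff.mpr ⟨t, fun h => ht (ZMod.injective_stdAddChar ?_)⟩
  simpa [psiAddChar] using h

lemma sum_psiF_mul_add_mul (A B : F) :
    ∑ z : F × F, psiF p F (z.1 * A + z.2 * B) =
      if A = 0 ∧ B = 0 then (Fintype.card F : ℂ) ^ 2 else 0 := by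
  have hψ := AddChar.IsPrimitive.of_ne_one (psiAddChar_ne_one (F := F) p)
  simp_rw [← psiAddChar_apply, AddChar.map_add_eq_mul, Fintype.sum_prod_type, ← mul_sum,
    ← sum_mul, AddChar.sum_mulShift _ hψ]
  by_cases hA : A = 0 <;> by_cases hB : B = 0 <;> simp [hA, hB, sq]

lemma sum_psiF_bformBC_doubleRootForm (h3 : (3 : F) ≠ 0) (m : Option F) (y : Fin 4 → F) :
    ∑ z, psiF p F (bformBC (doubleRootForm m z) y) =
      if IsSingularAt y (projPoint (dualPoint m)) then (Fintype.card F : ℂ) ^ 2 else 0 := by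
  have h (z : F × F) : bformBC (doubleRootForm m z) y =
      z.1 * (partialU y (perpPoint (projPoint m)) / 3) +
        z.2 * (partialV y (perpPoint (projPoint m)) / 3) := by
    rw [eq_comm, ← mul_right_inj' h3, three_mul_bformBC_doubleRootForm h3]
    field_simp
  have hcond : (partialU y (perpPoint (projPoint m)) / 3 = 0 ∧
      partialV y (perpPoint (projPoint m)) / 3 = 0) ↔
        IsSingularAt y (projPoint (dualPoint m)) := by
    rw [← isSingularAt_perpPoint_projPoint_iff]
    simp only [IsSingularAt, div_eq_zero_iff, h3, or_false]
  simp only [h, sum_psiF_mul_add_mul, hcond]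

def singularPoints (x : Fin 4 → F) : Finset (Option F) := {m | IsSingularAt x (projPoint m)}

lemma card_singularPoints_zero : #(singularPoints (0 : Fin 4 → F)) = Fintype.card F + 1 := by
  simp [singularPoints, IsSingularAt, partialU, partialV]

lemma card_singularPoints_eq_one (h3 : (3 : F) ≠ 0) {x : Fin 4 → F} (hx : x ≠ 0)
    (hD : DiscBC x = 0) : #(singularPoints x) = 1 := by
  obtain ⟨m, hm⟩ := (discBC_eq_zero_iff h3).mp hD
  refine card_eq_one.mpr ⟨m, eq_singleton_iff_unique_mem.mpr ⟨by simpa [singularPoints], ?_⟩⟩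
  intro m' hm'
  by_contra hne
  exact hx (eq_zero_of_isSingularAt_projPoint h3 hne (by simpa [singularPoints] using hm') hm)

lemma singularPoints_eq_empty (h3 : (3 : F) ≠ 0) {x : Fin 4 → F} (hD : DiscBC x ≠ 0) :
    singularPoints x = ∅ := by
  simpa [singularPoints, discBC_eq_zero_iff h3] using hD

lemma sum_indicator_discBC_mul_psiF (h3 : (3 : F) ≠ 0) (y : Fin 4 → F) :
    ∑ v, (if DiscBC v = 0 then (1 : ℂ) else 0) * psiF p F (bformBC v y) =
      (Fintype.card F : ℂ) ^ 2 * #(singularPoints y) - Fintype.card F := by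
  have hcover := sum_sum_comp_add_eq_sum_add_card_smul doubleRootForm {v | DiscBC v = 0}
    doubleRootForm_zero (fun _ _ _ _ hz h => eq_of_doubleRootForm_eq h3 hz h)
    (by simp [discBC_eq_zero_iff h3, isSingularAt_projPoint_iff h3])
    (fun v => psiF p F (bformBC v y))
  have hdual : ∑ m : Option F,
      (if IsSingularAt y (projPoint (dualPoint m)) then (Fintype.card F : ℂ) ^ 2 else 0) =
        (Fintype.card F : ℂ) ^ 2 * #(singularPoints y) := by
    refine (Equiv.sum_comp (dualPoint_involutive.toPerm _) (fun m =>
      if IsSingularAt y (projPoint m) then (Fintype.card F : ℂ) ^ 2 else 0)).trans ?_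
    rw [← sum_filter, sum_const, nsmul_eq_mul, mul_comm, singularPoints]
  have hψ0 : psiF p F (bformBC 0 y) = 1 := by
    rw [← psiAddChar_apply]
    simp [bformBC]
  simp only [sum_psiF_bformBC_doubleRootForm p h3, hdual, hψ0, Fintype.card_option,
    nsmul_eq_mul] at hcover
  simp only [ite_mul, one_mul, zero_mul, ← sum_filter]
  push_cast at hcover
  linear_combination -hcover

end Fourier

/-- Fourier transform of the characteristic function of singular
binary cubic forms. -/
theorem stmt8 (p : ℕ) [Fact p.Prime] [CharP F p] (hp : p ≠ 3) (x : Fin 4 → F) :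
    let Ψ : (Fin 4 → F) → ℂ := fun z => if DiscBC z = 0 then 1 else 0
    let Q : ℂ := (Fintype.card F : ℂ)
    (x = 0 → FTBC p Ψ x = 1/Q + 1/Q^2 - 1/Q^3) ∧
    (x ≠ 0 → DiscBC x = 0 → FTBC p Ψ x = 1/Q^2 - 1/Q^3) ∧
    (DiscBC x ≠ 0 → FTBC p Ψ x = -(1/Q^3)) := by
  intro Ψ Q
  have h3 : (3 : F) ≠ 0 := fun h =>
    hp ((Nat.prime_dvd_prime_iff_eq Fact.out Nat.prime_three).mp
      ((CharP.cast_eq_zero_iff F p 3).mp (by exact_mod_cast h)))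
  have hQ : Q ≠ 0 := Nat.cast_ne_zero.mpr Fintype.card_ne_zero
  have hFT : FTBC p Ψ x = (Q ^ 2 * #(singularPoints x) - Q) / Q ^ 4 := by
    rw [FTBC, sum_indicator_discBC_mul_psiF p h3, inv_mul_eq_div]
  refine ⟨?_, fun hx hD => ?_, fun hD => ?_⟩
  · rintro rfl
    rw [hFT, card_singularPoints_zero]
    field_simp
    push_cast
    ring
  · rw [hFT, card_singularPoints_eq_one h3 hx hD]
    field_simp
    ring
  · rw [hFT, singularPoints_eq_empty h3 hD, card_empty, Nat.cast_zero]
    field_simp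
    ring

end
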